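/- arXiv:2604.13782 — 5 statements merged into one kernel-verified Lean document; each statement's English description precedes it below -/
import Mathlib

section
/- The composition ρ² ∘ w₁ ∘ w₃ ∘ w₂ ∘ w₀ (with w₀ applied first) equals the ℤ-linear map T_KNY. -/
abbrev Pic : Type := Fin 10 → ℤ

/-- The intersection form on `Pic` in the basis `H_q, H_p, E_1, …, E_8`:
`H_q•H_p = 1`, `H_q•H_q = H_p•H_p = 0`, `H_q•E_i = H_p•E_i = 0`, `E_i•E_j = -δ_ij`.
(Coordinate `0` is `H_q`, coordinate `1` is `H_p`, coordinates `2,…,9` are `E_1,…,E_8`.) -/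
def bil (u v : Pic) : ℤ :=
  u 0 * v 1 + u 1 * v 0 - u 2 * v 2 - u 3 * v 3 - u 4 * v 4 - u 5 * v 5
    - u 6 * v 6 - u 7 * v 7 - u 8 * v 8 - u 9 * v 9

/-- `α₀ = H_p - E_1 - E_2` -/
def α₀ : Pic := ![0, 1, -1, -1, 0, 0, 0, 0, 0, 0]
/-- `α₁ = H_q - E_5 - E_6` -/
def α₁ : Pic := ![1, 0, 0, 0, 0, 0, -1, -1, 0, 0]
/-- `α₂ = H_p - E_3 - E_4` -/
def α₂ : Pic := ![0, 1, 0, 0, -1, -1, 0, 0, 0, 0]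
/-- `α₃ = H_q - E_7 - E_8` -/
def α₃ : Pic := ![1, 0, 0, 0, 0, 0, 0, 0, -1, -1]
/-- `δ = α₀ + α₁ + α₂ + α₃ = 2H_q + 2H_p - E_1 - ⋯ - E_8` -/
def δv : Pic := ![2, 2, -1, -1, -1, -1, -1, -1, -1, -1]

/-- The reflection `F ↦ F + (F • a) a`. -/
def reflE (a : Pic) : Module.End ℤ Pic where
  toFun F := F + bil F a • a
  map_add' x y := by
    show x + y + bil (x + y) a • a = (x + bil x a • a) + (y + bil y a • a)
    have h : bil (x + y) a = bil x a + bil y a := by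
      simp only [bil, Pi.add_apply]; ring
    rw [h, add_smul]; abel
  map_smul' c x := by
    show c • x + bil (c • x) a • a = c • (x + bil x a • a)
    have h : bil (c • x) a = c * bil x a := by
      simp only [bil, Pi.smul_apply, smul_eq_mul]; ring
    rw [h, mul_smul, smul_add]

def w0 : Module.End ℤ Pic := reflE α₀
def w1 : Module.End ℤ Pic := reflE α₁
def w2 : Module.End ℤ Pic := reflE α₂
def w3 : Module.End ℤ Pic := reflE α₃

/-- The linear map permuting coordinates, `(permL p v) i = v (p i)`;
for an involution `p` it sends the basis vector `e_j` to `e_(p j)`. -/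
def permL (p : Fin 10 → Fin 10) : Module.End ℤ Pic := LinearMap.funLeft ℤ ℤ p

/-- `σ₁` permutes the basis by `(H_q H_p)(E_1 E_7)(E_2 E_8)(E_3 E_5)(E_4 E_6)`. -/
def σ₁ : Module.End ℤ Pic := permL ![1, 0, 8, 9, 6, 7, 4, 5, 2, 3]
/-- `σ₂` permutes the basis by `(E_1 E_3)(E_2 E_4)`. -/
def σ₂ : Module.End ℤ Pic := permL ![0, 1, 4, 5, 2, 3, 6, 7, 8, 9]
/-- `ρ = σ₁ ∘ σ₂`, which permutes the basis by `(H_q H_p)(E_1 E_5 E_3 E_7)(E_2 E_6 E_4 E_8)`. -/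
def ρ : Module.End ℤ Pic := σ₁ * σ₂

/-- The linear map sending the `j`-th basis vector to `v j`. -/
def mkEnd (v : Fin 10 → Pic) : Module.End ℤ Pic :=
  Matrix.toLin' (Matrix.of fun i j => v j i)

/-- The ℤ-linear map `T_KNY` on `Pic`, given by its values on the basis
`H_q, H_p, E_1, …, E_8` (each row lists coordinates w.r.t. that basis). -/
def TKNY : Module.End ℤ Pic := mkEnd
  ![![5, 2, -1, -1, -1, -1, -2, -2, -2, -2],
    ![2, 1, 0, 0, 0, 0, -1, -1, -1, -1],
    ![2, 1, 0, 0, 0, -1, -1, -1, -1, -1],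
    ![2, 1, 0, 0, -1, 0, -1, -1, -1, -1],
    ![2, 1, 0, -1, 0, 0, -1, -1, -1, -1],
    ![2, 1, -1, 0, 0, 0, -1, -1, -1, -1],
    ![1, 0, 0, 0, 0, 0, 0, 0, 0, -1],
    ![1, 0, 0, 0, 0, 0, 0, 0, -1, 0],
    ![1, 0, 0, 0, 0, 0, 0, -1, 0, 0],
    ![1, 0, 0, 0, 0, 0, -1, 0, 0, 0]]

/-- The composition `ρ² ∘ w₁ ∘ w₃ ∘ w₂ ∘ w₀` (with `w₀` applied first) equals `T_KNY`. -/
theorem composition_eq_TKNY : ρ * ρ * w1 * w3 * w2 * w0 = TKNY := by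
  apply (Pi.basisFun ℤ (Fin 10)).ext
  intro j
  simp only [Pi.basisFun_apply]
  fin_cases j <;> decide
end

section
/- T_KNY and T_Sak are not conjugate in the extended affine Weyl group Ŵ(A₃⁽¹⁾): for every element g of the subgroup of the group of ℤ-linear automorphisms of Pic generated by {w₀, w₁, w₂, w₃, σ₁, σ₂}, one has g ∘ T_Sak ∘ g⁻¹ ≠ T_KNY. -/
theorem reflE_sq (a : Pic) (ha : bil a a = -2) : reflE a * reflE a = 1 := by
  apply LinearMap.ext
  intro F
  show reflE a (reflE a F) = F
  simp only [reflE, LinearMap.coe_mk, AddHom.coe_mk]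
  have h : bil (F + bil F a • a) a = bil F a + bil F a * bil a a := by
    simp only [bil, Pi.add_apply, Pi.smul_apply, smul_eq_mul]; ring
  rw [h, ha]
  module

/-- The reflection as a ℤ-linear automorphism of `Pic`. -/
def reflU (a : Pic) (ha : bil a a = -2) : (Module.End ℤ Pic)ˣ :=
  ⟨reflE a, reflE a, reflE_sq a ha, reflE_sq a ha⟩

def w0u : (Module.End ℤ Pic)ˣ := reflU α₀ (by decide)
def w1u : (Module.End ℤ Pic)ˣ := reflU α₁ (by decide)
def w2u : (Module.End ℤ Pic)ˣ := reflU α₂ (by decide)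
def w3u : (Module.End ℤ Pic)ˣ := reflU α₃ (by decide)

theorem permL_sq (p : Fin 10 → Fin 10) (hp : ∀ i, p (p i) = i) :
    permL p * permL p = 1 := by
  apply LinearMap.ext
  intro v
  funext i
  simp [permL, Module.End.mul_apply, LinearMap.funLeft_apply, hp]

/-- A coordinate permutation by an involution, as a ℤ-linear automorphism of `Pic`. -/
def permU (p : Fin 10 → Fin 10) (hp : ∀ i, p (p i) = i) : (Module.End ℤ Pic)ˣ :=
  ⟨permL p, permL p, permL_sq p hp, permL_sq p hp⟩

/-- `σ₁` permutes the basis by `(H_q H_p)(E_1 E_7)(E_2 E_8)(E_3 E_5)(E_4 E_6)`. -/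
def σ₁u : (Module.End ℤ Pic)ˣ := permU ![1, 0, 8, 9, 6, 7, 4, 5, 2, 3] (by decide)
/-- `σ₂` permutes the basis by `(E_1 E_3)(E_2 E_4)`. -/
def σ₂u : (Module.End ℤ Pic)ˣ := permU ![0, 1, 4, 5, 2, 3, 6, 7, 8, 9] (by decide)

/-- The extended affine Weyl group `Ŵ(A₃⁽¹⁾)`: the subgroup of the group of ℤ-linear
automorphisms of `Pic` generated by `w₀, w₁, w₂, w₃, σ₁, σ₂`. -/
def G : Subgroup (Module.End ℤ Pic)ˣ :=
  Subgroup.closure {w0u, w1u, w2u, w3u, σ₁u, σ₂u}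

/-- The ℤ-linear map `T_Sak` on `Pic`, given by its values on the basis
`H_q, H_p, E_1, …, E_8` (each row lists coordinates w.r.t. that basis). -/
def TSak : Module.End ℤ Pic := mkEnd
  ![![3, 2, 0, 0, -1, -1, -1, -1, -2, -2],
    ![2, 1, 0, 0, -1, -1, 0, 0, -1, -1],
    ![2, 1, 0, 0, -1, -1, 0, -1, -1, -1],
    ![2, 1, 0, 0, -1, -1, -1, 0, -1, -1],
    ![1, 0, 0, 0, 0, 0, 0, 0, 0, -1],
    ![1, 0, 0, 0, 0, 0, 0, 0, -1, 0],
    ![1, 1, 0, 0, 0, -1, 0, 0, -1, -1],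
    ![1, 1, 0, 0, -1, 0, 0, 0, -1, -1],
    ![0, 0, 1, 0, 0, 0, 0, 0, 0, 0],
    ![0, 0, 0, 1, 0, 0, 0, 0, 0, 0]]

lemma trace_mkEnd (v : Fin 10 → Pic) :
    LinearMap.trace ℤ Pic (mkEnd v) = ∑ i, v i i := by
  rw [mkEnd, LinearMap.trace_eq_matrix_trace ℤ (Pi.basisFun ℤ (Fin 10)),
    LinearMap.toMatrix_eq_toMatrix', LinearMap.toMatrix'_toLin']
  rfl

/-- `T_KNY` and `T_Sak` are not conjugate in the extended affine Weyl group `Ŵ(A₃⁽¹⁾)`. -/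
theorem TKNY_TSak_not_conjugate :
    ∀ g ∈ G, (↑g : Module.End ℤ Pic) * TSak * (↑g⁻¹ : Module.End ℤ Pic) ≠ TKNY := by
  intro g _ h
  have := LinearMap.trace_conj (R := ℤ) (M := Pic) TSak g
  rw [h] at this
  have h1 : LinearMap.trace ℤ Pic TKNY = 6 := by
    rw [TKNY, trace_mkEnd]; decide
  have h2 : LinearMap.trace ℤ Pic TSak = 4 := by
    rw [TSak, trace_mkEnd]; decide
  rw [h1, h2] at this
  exact absurd this (by norm_num)
end

section
/- Let s₀ ∈ ℂ with s₀ ≠ 0, f(s₀) ≠ 0 and f(s₀)g(s₀) − g(s₀) + n ≠ 0. Suppose f and g are differentiable at s₀ with derivatives satisfying the perturbed Laguerre differential system at s₀. Then q and p are differentiable at s₀ and satisfy the Hamiltonian form of the fifth Painlevé equation there: q′(s₀) = (q(s₀)(q(s₀) − 1)(2p(s₀) + s₀) − a₁(q(s₀) − 1) − a₃ q(s₀))/s₀ and p′(s₀) = (p(s₀)(p(s₀) + s₀)(1 − 2q(s₀)) + (a₁ + a₃) p(s₀) − a₂ s₀)/s₀. -/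
/-- `q(s) = (f(s) - 1)(f(s)g(s) - g(s) + n)/(s f(s))`. -/
noncomputable def qC (n : ℂ) (f g : ℂ → ℂ) (s : ℂ) : ℂ :=
  (f s - 1) * (f s * g s - g s + n) / (s * f s)

/-- `p(s) = s(g(s) - n)/(f(s)g(s) - g(s) + n)`. -/
noncomputable def pC (n : ℂ) (f g : ℂ → ℂ) (s : ℂ) : ℂ :=
  s * (g s - n) / (f s * g s - g s + n)

set_option maxHeartbeats 2000000 in
private lemma alg1 (α γ n s F G : ℂ) (hs : s ≠ 0) (hF : F ≠ 0) (hden : F * G - G + n ≠ 0) :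
    (((F - 1) * (F * G - G + n) / (s * F)) * (((F - 1) * (F * G - G + n) / (s * F)) - 1)
        * (2 * (s * (G - n) / (F * G - G + n)) + s)
      - (-n) * (((F - 1) * (F * G - G + n) / (s * F)) - 1)
      - (1 - α - γ - n) * ((F - 1) * (F * G - G + n) / (s * F))) / s
    = (((((γ + 2 * G) * F ^ 2 - 4 * F * G + (α - γ - s + 2 * n) * F + 2 * G - α - 2 * n) / s)
          * (F * G - G + n)
        + (F - 1) * ((((γ + 2 * G) * F ^ 2 - 4 * F * G + (α - γ - s + 2 * n) * F + 2 * G - α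
              - 2 * n) / s) * G
          + F * ((G ^ 2 * (1 - F ^ 2) - (α + 2 * n + γ * F ^ 2) * G + (α + n) * n) / (s * F))
          - ((G ^ 2 * (1 - F ^ 2) - (α + 2 * n + γ * F ^ 2) * G + (α + n) * n) / (s * F))))
        * (s * F)
      - (F - 1) * (F * G - G + n)
        * (1 * F + s * ((((γ + 2 * G) * F ^ 2 - 4 * F * G + (α - γ - s + 2 * n) * F
            + 2 * G - α - 2 * n) / s)))) / (s * F) ^ 2 := by
  obtain ⟨K, hKdef⟩ : ∃ K, F * G - G + n = K := ⟨_, rfl⟩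
  have hKne : K ≠ 0 := hKdef ▸ hden
  have hn : n = K - F * G + G := by rw [← hKdef]; ring
  rw [hKdef]
  subst hn
  clear hden hKdef
  rw [← sub_eq_zero]
  field_simp
  ring

set_option maxHeartbeats 2000000 in
private lemma alg2 (α γ n s F G : ℂ) (hs : s ≠ 0) (hF : F ≠ 0) (hden : F * G - G + n ≠ 0) :
    ((s * (G - n) / (F * G - G + n)) * ((s * (G - n) / (F * G - G + n)) + s)
        * (1 - 2 * ((F - 1) * (F * G - G + n) / (s * F)))
      + ((-n) + (1 - α - γ - n)) * (s * (G - n) / (F * G - G + n)) - (γ + n) * s) / s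
    = ((1 * (G - n)
          + s * ((G ^ 2 * (1 - F ^ 2) - (α + 2 * n + γ * F ^ 2) * G + (α + n) * n) / (s * F)))
          * (F * G - G + n)
      - s * (G - n)
        * ((((γ + 2 * G) * F ^ 2 - 4 * F * G + (α - γ - s + 2 * n) * F + 2 * G - α - 2 * n) / s)
            * G
          + F * ((G ^ 2 * (1 - F ^ 2) - (α + 2 * n + γ * F ^ 2) * G + (α + n) * n) / (s * F))
          - ((G ^ 2 * (1 - F ^ 2) - (α + 2 * n + γ * F ^ 2) * G + (α + n) * n) / (s * F))))
      / (F * G - G + n) ^ 2 := by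
  obtain ⟨K, hKdef⟩ : ∃ K, F * G - G + n = K := ⟨_, rfl⟩
  have hKne : K ≠ 0 := hKdef ▸ hden
  have hn : n = K - F * G + G := by rw [← hKdef]; ring
  rw [hKdef]
  subst hn
  clear hden hKdef
  rw [← sub_eq_zero]
  field_simp
  ring

/-- If `f, g` are differentiable at `s₀` with derivatives satisfying the perturbed Laguerre
differential system there, then `q` and `p` are differentiable at `s₀` and satisfy the
KNY Hamiltonian form of the fifth Painlevé equation there, with
`a₁ = -n`, `a₂ = γ + n`, `a₃ = 1 - α - γ - n`. -/
theorem perturbedLaguerre_differential_is_PV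
    (α γ n : ℂ) (f g : ℂ → ℂ) (s₀ : ℂ)
    (hs : s₀ ≠ 0) (hf : f s₀ ≠ 0) (hden : f s₀ * g s₀ - g s₀ + n ≠ 0)
    (hdf : HasDerivAt f
      (((γ + 2 * g s₀) * f s₀ ^ 2 - 4 * f s₀ * g s₀ + (α - γ - s₀ + 2 * n) * f s₀
          + 2 * g s₀ - α - 2 * n) / s₀) s₀)
    (hdg : HasDerivAt g
      ((g s₀ ^ 2 * (1 - f s₀ ^ 2) - (α + 2 * n + γ * f s₀ ^ 2) * g s₀ + (α + n) * n)
        / (s₀ * f s₀)) s₀) :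
    HasDerivAt (qC n f g)
      ((qC n f g s₀ * (qC n f g s₀ - 1) * (2 * pC n f g s₀ + s₀)
          - (-n) * (qC n f g s₀ - 1) - (1 - α - γ - n) * qC n f g s₀) / s₀) s₀
    ∧ HasDerivAt (pC n f g)
      ((pC n f g s₀ * (pC n f g s₀ + s₀) * (1 - 2 * qC n f g s₀)
          + ((-n) + (1 - α - γ - n)) * pC n f g s₀ - (γ + n) * s₀) / s₀) s₀ := by
  set F' := ((γ + 2 * g s₀) * f s₀ ^ 2 - 4 * f s₀ * g s₀ + (α - γ - s₀ + 2 * n) * f s₀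
          + 2 * g s₀ - α - 2 * n) / s₀ with hF'
  set G' := (g s₀ ^ 2 * (1 - f s₀ ^ 2) - (α + 2 * n + γ * f s₀ ^ 2) * g s₀ + (α + n) * n)
        / (s₀ * f s₀) with hG'
  have hB : HasDerivAt (fun s => f s * g s - g s + n)
      (F' * g s₀ + f s₀ * G' - G') s₀ := by
    simpa using ((hdf.mul hdg).sub hdg).add_const n
  have hsf : s₀ * f s₀ ≠ 0 := mul_ne_zero hs hf
  constructor
  · have hN : HasDerivAt (fun s => (f s - 1) * (f s * g s - g s + n))
        (F' * (f s₀ * g s₀ - g s₀ + n) + (f s₀ - 1) * (F' * g s₀ + f s₀ * G' - G')) s₀ := by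
      exact (hdf.sub_const 1).mul hB
    have hD : HasDerivAt (fun s => s * f s) (1 * f s₀ + s₀ * F') s₀ :=
      (hasDerivAt_id s₀).mul hdf
    have h : HasDerivAt (fun s => (f s - 1) * (f s * g s - g s + n) / (s * f s)) _ s₀ :=
      hN.div hD hsf
    convert h using 1
    · rfl
    simp only [qC, pC, hF', hG']
    exact alg1 α γ n s₀ (f s₀) (g s₀) hs hf hden
  · have hN : HasDerivAt (fun s => s * (g s - n)) (1 * (g s₀ - n) + s₀ * G') s₀ :=
      (hasDerivAt_id s₀).mul (hdg.sub_const n)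
    have h : HasDerivAt (fun s => s * (g s - n) / (f s * g s - g s + n)) _ s₀ :=
      hN.div hB hden
    convert h using 1
    · rfl
    simp only [qC, pC, hF', hG']
    exact alg2 α γ n s₀ (f s₀) (g s₀) hs hf hden
end

section
/- The maps Φ₁ and Φ₂ are mutually inverse where defined: (i) if f, g ∈ ℂ satisfy g ≠ 0, g ≠ n_L and γ_L + g ≠ 0, then Φ₂(Φ₁(f, g)) = (f, g); (ii) if x, y ∈ ℂ satisfy x ≠ 0, x + c ≠ 0, x + y ≠ 0 and (γ_M − 1)x − c·n_M ≠ 0, then Φ₁(Φ₂(x, y)) = (x, y). -/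
/-- `Φ₁ : (f, g) ↦ (x, y) = (c g/γ_L, c g (γ_L f + (f - 1)g + n_L)/(γ_L(g - n_L)))`,
where `γ_L = γ_M - 1` and `n_L = n_M`. -/
noncomputable def Φ₁ (c γM nM : ℂ) : ℂ × ℂ → ℂ × ℂ := fun fg =>
  (c * fg.2 / (γM - 1),
   c * fg.2 * ((γM - 1) * fg.1 + (fg.1 - 1) * fg.2 + nM) / ((γM - 1) * (fg.2 - nM)))

/-- `Φ₂ : (x, y) ↦ (f, g) = ((x + y)((γ_M - 1)x - c n_M)/((γ_M - 1) x (c + x)), (γ_M - 1)x/c)`. -/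
noncomputable def Φ₂ (c γM nM : ℂ) : ℂ × ℂ → ℂ × ℂ := fun xy =>
  ((xy.1 + xy.2) * ((γM - 1) * xy.1 - c * nM) / ((γM - 1) * xy.1 * (c + xy.1)),
   (γM - 1) * xy.1 / c)

/-- The maps `Φ₁` and `Φ₂` are mutually inverse where defined. -/
theorem Phi1_Phi2_mutually_inverse
    (c γM nM : ℂ) (hc : c ≠ 0) (hγ : γM ≠ 1) :
    (∀ f g : ℂ, g ≠ 0 → g ≠ nM → (γM - 1) + g ≠ 0 →
        Φ₂ c γM nM (Φ₁ c γM nM (f, g)) = (f, g))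
    ∧ (∀ x y : ℂ, x ≠ 0 → x + c ≠ 0 → x + y ≠ 0 → (γM - 1) * x - c * nM ≠ 0 →
        Φ₁ c γM nM (Φ₂ c γM nM (x, y)) = (x, y)) := by
  have hγ' : γM - 1 ≠ 0 := sub_ne_zero.mpr hγ
  constructor
  · intro f g hg hgn hγg
    have hgn' : g - nM ≠ 0 := sub_ne_zero.mpr hgn
    have hx : c * g / (γM - 1) ≠ 0 := div_ne_zero (mul_ne_zero hc hg) hγ'
    have hcx : c + c * g / (γM - 1) ≠ 0 := by
      have h : c + c * g / (γM - 1) = c * ((γM - 1) + g) / (γM - 1) := by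
        field_simp
      rw [h]
      exact div_ne_zero (mul_ne_zero hc hγg) hγ'
    simp only [Φ₁, Φ₂, Prod.mk.injEq]
    constructor
    · rw [div_eq_iff (mul_ne_zero (mul_ne_zero hγ' hx) hcx)]
      field_simp
      ring
    · field_simp
  · intro x y hx hxc hxy hnum
    have hcx : c + x ≠ 0 := by rwa [add_comm] at hxc
    have hg' : (γM - 1) * x / c ≠ 0 := div_ne_zero (mul_ne_zero hγ' hx) hc
    have hsub : (γM - 1) * x / c - nM ≠ 0 := by
      rw [div_sub' hc]
      exact div_ne_zero hnum hc
    simp only [Φ₁, Φ₂, Prod.mk.injEq]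
    constructor
    · field_simp
    · have hD : (γM - 1) * x * (c + x) ≠ 0 := mul_ne_zero (mul_ne_zero hγ' hx) hcx
      rw [div_eq_iff (mul_ne_zero hγ' hsub)]
      field_simp
      ring
end

section
/- The pointwise stabiliser of α₁ + α₂ in G equals the subgroup of G generated by s₀, s₁, s₀′, s₁′ and τ: {g ∈ G : g(α₁ + α₂) = α₁ + α₂} = ⟨s₀, s₁, s₀′, s₁′, τ⟩. -/
def s₀ : (Module.End ℤ Pic)ˣ := w0u * w1u * w0u
def s₁ : (Module.End ℤ Pic)ˣ := w3u * w2u * w3u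
def s₀' : (Module.End ℤ Pic)ˣ := σ₂u * w2u * w0u
def s₁' : (Module.End ℤ Pic)ˣ := σ₁u * σ₂u * σ₁u * w3u * w1u
def τ : (Module.End ℤ Pic)ˣ := σ₁u


section StabiliserProof

abbrev UU : Type := (Module.End ℤ Pic)ˣ

/-- the fixed vector -/
def vv : Pic := α₁ + α₂

def Sset : Set UU := {w0u, w1u, w2u, w3u, σ₁u, σ₂u}

def Hset : Set UU := {s₀, s₁, s₀', s₁', τ}

def Hsub : Subgroup UU := Subgroup.closure Hset

def tU : UU := σ₂u * w1u * w0u * w3u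

def C : Fin 12 → UU :=
  ![1, w0u, w1u, w2u, w3u, σ₂u, w3u * w0u, w2u * w1u, w3u * w1u, σ₂u * w1u, w1u * w2u, w0u * w3u * w0u]

lemma endo_ext {f g : Module.End ℤ Pic}
    (h : ∀ i : Fin 10, f (Pi.single i 1) = g (Pi.single i 1)) : f = g := by
  apply LinearMap.pi_ext'
  intro i
  apply LinearMap.ext_ring
  simpa using h i

lemma unit_ext {a b : UU}
    (h : ∀ i : Fin 10, (a : Module.End ℤ Pic) (Pi.single i 1)
        = (b : Module.End ℤ Pic) (Pi.single i 1)) : a = b :=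
  Units.ext (endo_ext h)

lemma hgs0 : s₀ ∈ Hsub := Subgroup.subset_closure (by simp [Hset])
lemma hgs1 : s₁ ∈ Hsub := Subgroup.subset_closure (by simp [Hset])
lemma hgs0p : s₀' ∈ Hsub := Subgroup.subset_closure (by simp [Hset])
lemma hgs1p : s₁' ∈ Hsub := Subgroup.subset_closure (by simp [Hset])
lemma hgtau : τ ∈ Hsub := Subgroup.subset_closure (by simp [Hset])

/-- the stabiliser of `vv`, as a subgroup of the full unit group. -/
def fixSub : Subgroup UU where
  carrier := {g | (↑g : Module.End ℤ Pic) vv = vv}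
  one_mem' := rfl
  mul_mem' := by
    intro a b ha hb
    show ((a * b : UU) : Module.End ℤ Pic) vv = vv
    rw [Units.val_mul, Module.End.mul_apply, hb, ha]
  inv_mem' := by
    intro a ha
    have ha' : (↑a : Module.End ℤ Pic) vv = vv := ha
    show (↑(a⁻¹ : UU) : Module.End ℤ Pic) vv = vv
    calc (↑(a⁻¹ : UU) : Module.End ℤ Pic) vv
        = (↑(a⁻¹ : UU) : Module.End ℤ Pic) ((↑a : Module.End ℤ Pic) vv) := by rw [ha']
      _ = (↑(a⁻¹ * a : UU) : Module.End ℤ Pic) vv := by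
            rw [Units.val_mul, Module.End.mul_apply]
      _ = vv := by rw [inv_mul_cancel, Units.val_one, Module.End.one_apply]

lemma Hsub_le_fix : Hsub ≤ fixSub := by
  apply (Subgroup.closure_le _).2
  intro x hx
  simp only [Hset, Set.mem_insert_iff, Set.mem_singleton_iff] at hx
  rcases hx with rfl | rfl | rfl | rfl | rfl <;>
    · show (↑_ : Module.End ℤ Pic) vv = vv
      decide

lemma Hsub_le_G : Hsub ≤ G := by
  apply (Subgroup.closure_le _).2
  have h0 : w0u ∈ G := Subgroup.subset_closure (by simp)
  have h1 : w1u ∈ G := Subgroup.subset_closure (by simp)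
  have h2 : w2u ∈ G := Subgroup.subset_closure (by simp)
  have h3 : w3u ∈ G := Subgroup.subset_closure (by simp)
  have h4 : σ₁u ∈ G := Subgroup.subset_closure (by simp)
  have h5 : σ₂u ∈ G := Subgroup.subset_closure (by simp)
  intro x hx
  simp only [Hset, Set.mem_insert_iff, Set.mem_singleton_iff] at hx
  rcases hx with rfl | rfl | rfl | rfl | rfl
  · exact mul_mem (mul_mem h0 h1) h0
  · exact mul_mem (mul_mem h3 h2) h3
  · exact mul_mem (mul_mem h5 h2) h0
  · exact mul_mem (mul_mem (mul_mem (mul_mem h4 h5) h4) h3) h1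
  · exact h4

-- conjugation of the five generators of `Hsub` by `tU`
lemma conjA : ∀ h ∈ Hsub, tU * h * tU⁻¹ ∈ Hsub := by
  have key : Hsub ≤ Hsub.comap (MulAut.conj tU).toMonoidHom := by
    apply (Subgroup.closure_le _).2
    intro x hx
    simp only [Hset, Set.mem_insert_iff, Set.mem_singleton_iff] at hx
    have e0 : tU * s₀ * tU⁻¹ = s₁ := by apply unit_ext; decide
    have e1 : tU * s₁ * tU⁻¹ = s₀ := by apply unit_ext; decide
    have e2 : tU * s₀' * tU⁻¹ = s₁' * s₀' * s₁' := by apply unit_ext; decide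
    have e3 : tU * s₁' * tU⁻¹ = s₁' := by apply unit_ext; decide
    have e4 : tU * τ * tU⁻¹ = τ * s₀' * s₁' := by apply unit_ext; decide
    rcases hx with rfl | rfl | rfl | rfl | rfl
    · exact Subgroup.mem_comap.2 (by show tU * s₀ * tU⁻¹ ∈ Hsub; rw [e0]; exact hgs1)
    · exact Subgroup.mem_comap.2 (by show tU * s₁ * tU⁻¹ ∈ Hsub; rw [e1]; exact hgs0)
    · exact Subgroup.mem_comap.2 (by show tU * s₀' * tU⁻¹ ∈ Hsub; rw [e2]; exact mul_mem (mul_mem hgs1p hgs0p) hgs1p)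
    · exact Subgroup.mem_comap.2 (by show tU * s₁' * tU⁻¹ ∈ Hsub; rw [e3]; exact hgs1p)
    · exact Subgroup.mem_comap.2 (by show tU * τ * tU⁻¹ ∈ Hsub; rw [e4]; exact mul_mem (mul_mem hgtau hgs0p) hgs1p)
  intro h hh
  exact Subgroup.mem_comap.1 (key hh)

lemma conjB : ∀ h ∈ Hsub, tU⁻¹ * h * tU ∈ Hsub := by
  have key : Hsub ≤ Hsub.comap (MulAut.conj tU⁻¹).toMonoidHom := by
    apply (Subgroup.closure_le _).2
    intro x hx
    simp only [Hset, Set.mem_insert_iff, Set.mem_singleton_iff] at hx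
    have e0 : tU⁻¹ * s₀ * tU⁻¹⁻¹ = s₁ := by apply unit_ext; decide
    have e1 : tU⁻¹ * s₁ * tU⁻¹⁻¹ = s₀ := by apply unit_ext; decide
    have e2 : tU⁻¹ * s₀' * tU⁻¹⁻¹ = s₁' * s₀' * s₁' := by apply unit_ext; decide
    have e3 : tU⁻¹ * s₁' * tU⁻¹⁻¹ = s₁' := by apply unit_ext; decide
    have e4 : tU⁻¹ * τ * tU⁻¹⁻¹ = τ * s₀' * s₁' := by apply unit_ext; decide
    rcases hx with rfl | rfl | rfl | rfl | rfl
    · exact Subgroup.mem_comap.2 (by show tU⁻¹ * s₀ * tU⁻¹⁻¹ ∈ Hsub; rw [e0]; exact hgs1)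
    · exact Subgroup.mem_comap.2 (by show tU⁻¹ * s₁ * tU⁻¹⁻¹ ∈ Hsub; rw [e1]; exact hgs0)
    · exact Subgroup.mem_comap.2 (by show tU⁻¹ * s₀' * tU⁻¹⁻¹ ∈ Hsub; rw [e2]; exact mul_mem (mul_mem hgs1p hgs0p) hgs1p)
    · exact Subgroup.mem_comap.2 (by show tU⁻¹ * s₁' * tU⁻¹⁻¹ ∈ Hsub; rw [e3]; exact hgs1p)
    · exact Subgroup.mem_comap.2 (by show tU⁻¹ * τ * tU⁻¹⁻¹ ∈ Hsub; rw [e4]; exact mul_mem (mul_mem hgtau hgs0p) hgs1p)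
  intro h hh
  exact Subgroup.mem_comap.1 (key hh)

lemma tU_mem_normalizer : tU ∈ Subgroup.normalizer (Hsub : Set UU) := by
  rw [Subgroup.mem_normalizer_iff]
  intro h
  constructor
  · exact fun hh => conjA h hh
  · intro hh
    have := conjB _ hh
    have e : tU⁻¹ * (tU * h * tU⁻¹) * tU = h := by group
    rwa [e] at this

lemma conj_zpow_mem {W : UU} (hW : W ∈ Hsub) (m : ℤ) :
    tU ^ (-m) * W * tU ^ m ∈ Hsub := by
  have hn : tU ^ (-m) ∈ Subgroup.normalizer (Hsub : Set UU) := Subgroup.zpow_mem _ tU_mem_normalizer (-m)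
  have := (Subgroup.mem_normalizer_iff.1 hn W).1 hW
  rwa [show (tU ^ (-m))⁻¹ = tU ^ m by rw [← zpow_neg, neg_neg]] at this

/-- the decomposition predicate -/
def Pp (g : UU) : Prop := ∃ (j : Fin 12) (m : ℤ) (h : UU), h ∈ Hsub ∧ g = C j * tU ^ m * h

lemma step_aux {x W : UU} {j j' : Fin 12} {s : ℤ} (hW : W ∈ Hsub)
    (hEq : x * C j = C j' * tU ^ s * W) (m : ℤ) {h : UU} (hh : h ∈ Hsub) :
    Pp (x * (C j * tU ^ m * h)) := by
  refine ⟨j', s + m, (tU ^ (-m) * W * tU ^ m) * h, mul_mem (conj_zpow_mem hW m) hh, ?_⟩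
  have h1 : x * (C j * tU ^ m * h) = (x * C j) * (tU ^ m * h) := by group
  rw [h1, hEq]
  group

lemma eq_0_0 : w0u * C 0 = C 1 * tU ^ (0 : ℤ) * (1) := by
  apply unit_ext; decide

lemma eq_0_1 : w0u * C 1 = C 0 * tU ^ (0 : ℤ) * (1) := by
  apply unit_ext; decide

lemma eq_0_2 : w0u * C 2 = C 2 * tU ^ (0 : ℤ) * (s₀) := by
  apply unit_ext; decide

lemma eq_0_3 : w0u * C 3 = C 5 * tU ^ (0 : ℤ) * (s₀') := by
  apply unit_ext; decide

lemma eq_0_4 : w0u * C 4 = C 9 * tU ^ (1 : ℤ) * (1) := by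
  apply unit_ext; decide

lemma eq_0_5 : w0u * C 5 = C 3 * tU ^ (0 : ℤ) * (s₀') := by
  apply unit_ext; decide

lemma eq_0_6 : w0u * C 6 = C 11 * tU ^ (0 : ℤ) * (1) := by
  apply unit_ext; decide

lemma eq_0_7 : w0u * C 7 = C 7 * tU ^ (0 : ℤ) * (s₀) := by
  apply unit_ext; decide

lemma eq_0_8 : w0u * C 8 = C 10 * tU ^ (1 : ℤ) * (s₁' * s₀' * s₁') := by
  apply unit_ext; decide

lemma eq_0_9 : w0u * C 9 = C 4 * tU ^ (-1 : ℤ) * (1) := by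
  apply unit_ext; decide

lemma eq_0_10 : w0u * C 10 = C 8 * tU ^ (-1 : ℤ) * (s₀') := by
  apply unit_ext; decide

lemma eq_0_11 : w0u * C 11 = C 6 * tU ^ (0 : ℤ) * (1) := by
  apply unit_ext; decide

lemma eq_1_0 : w1u * C 0 = C 2 * tU ^ (0 : ℤ) * (1) := by
  apply unit_ext; decide

lemma eq_1_1 : w1u * C 1 = C 1 * tU ^ (0 : ℤ) * (s₀) := by
  apply unit_ext; decide

lemma eq_1_2 : w1u * C 2 = C 0 * tU ^ (0 : ℤ) * (1) := by
  apply unit_ext; decide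

lemma eq_1_3 : w1u * C 3 = C 10 * tU ^ (0 : ℤ) * (1) := by
  apply unit_ext; decide

lemma eq_1_4 : w1u * C 4 = C 8 * tU ^ (0 : ℤ) * (1) := by
  apply unit_ext; decide

lemma eq_1_5 : w1u * C 5 = C 9 * tU ^ (0 : ℤ) * (1) := by
  apply unit_ext; decide

lemma eq_1_6 : w1u * C 6 = C 6 * tU ^ (0 : ℤ) * (s₀) := by
  apply unit_ext; decide

lemma eq_1_7 : w1u * C 7 = C 11 * tU ^ (-2 : ℤ) * (1) := by
  apply unit_ext; decide

lemma eq_1_8 : w1u * C 8 = C 4 * tU ^ (0 : ℤ) * (1) := by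
  apply unit_ext; decide

lemma eq_1_9 : w1u * C 9 = C 5 * tU ^ (0 : ℤ) * (1) := by
  apply unit_ext; decide

lemma eq_1_10 : w1u * C 10 = C 3 * tU ^ (0 : ℤ) * (1) := by
  apply unit_ext; decide

lemma eq_1_11 : w1u * C 11 = C 7 * tU ^ (2 : ℤ) * (1) := by
  apply unit_ext; decide

lemma eq_2_0 : w2u * C 0 = C 3 * tU ^ (0 : ℤ) * (1) := by
  apply unit_ext; decide

lemma eq_2_1 : w2u * C 1 = C 5 * tU ^ (0 : ℤ) * (s₀') := by
  apply unit_ext; decide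

lemma eq_2_2 : w2u * C 2 = C 7 * tU ^ (0 : ℤ) * (1) := by
  apply unit_ext; decide

lemma eq_2_3 : w2u * C 3 = C 0 * tU ^ (0 : ℤ) * (1) := by
  apply unit_ext; decide

lemma eq_2_4 : w2u * C 4 = C 4 * tU ^ (0 : ℤ) * (s₁) := by
  apply unit_ext; decide

lemma eq_2_5 : w2u * C 5 = C 1 * tU ^ (0 : ℤ) * (s₀') := by
  apply unit_ext; decide

lemma eq_2_6 : w2u * C 6 = C 8 * tU ^ (1 : ℤ) * (s₀') := by
  apply unit_ext; decide

lemma eq_2_7 : w2u * C 7 = C 2 * tU ^ (0 : ℤ) * (1) := by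
  apply unit_ext; decide

lemma eq_2_8 : w2u * C 8 = C 6 * tU ^ (-1 : ℤ) * (s₁' * s₀' * s₁') := by
  apply unit_ext; decide

lemma eq_2_9 : w2u * C 9 = C 9 * tU ^ (0 : ℤ) * (s₀) := by
  apply unit_ext; decide

lemma eq_2_10 : w2u * C 10 = C 11 * tU ^ (-2 : ℤ) * (1) := by
  apply unit_ext; decide

lemma eq_2_11 : w2u * C 11 = C 10 * tU ^ (2 : ℤ) * (1) := by
  apply unit_ext; decide

lemma eq_3_0 : w3u * C 0 = C 4 * tU ^ (0 : ℤ) * (1) := by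
  apply unit_ext; decide

lemma eq_3_1 : w3u * C 1 = C 6 * tU ^ (0 : ℤ) * (1) := by
  apply unit_ext; decide

lemma eq_3_2 : w3u * C 2 = C 8 * tU ^ (0 : ℤ) * (1) := by
  apply unit_ext; decide

lemma eq_3_3 : w3u * C 3 = C 3 * tU ^ (0 : ℤ) * (s₁) := by
  apply unit_ext; decide

lemma eq_3_4 : w3u * C 4 = C 0 * tU ^ (0 : ℤ) * (1) := by
  apply unit_ext; decide

lemma eq_3_5 : w3u * C 5 = C 7 * tU ^ (1 : ℤ) * (1) := by
  apply unit_ext; decide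

lemma eq_3_6 : w3u * C 6 = C 1 * tU ^ (0 : ℤ) * (1) := by
  apply unit_ext; decide

lemma eq_3_7 : w3u * C 7 = C 5 * tU ^ (-1 : ℤ) * (1) := by
  apply unit_ext; decide

lemma eq_3_8 : w3u * C 8 = C 2 * tU ^ (0 : ℤ) * (1) := by
  apply unit_ext; decide

lemma eq_3_9 : w3u * C 9 = C 11 * tU ^ (-1 : ℤ) * (1) := by
  apply unit_ext; decide

lemma eq_3_10 : w3u * C 10 = C 10 * tU ^ (0 : ℤ) * (s₁) := by
  apply unit_ext; decide

lemma eq_3_11 : w3u * C 11 = C 9 * tU ^ (1 : ℤ) * (1) := by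
  apply unit_ext; decide

lemma eq_4_0 : σ₁u * C 0 = C 0 * tU ^ (0 : ℤ) * (τ) := by
  apply unit_ext; decide

lemma eq_4_1 : σ₁u * C 1 = C 4 * tU ^ (0 : ℤ) * (τ) := by
  apply unit_ext; decide

lemma eq_4_2 : σ₁u * C 2 = C 3 * tU ^ (0 : ℤ) * (τ) := by
  apply unit_ext; decide

lemma eq_4_3 : σ₁u * C 3 = C 2 * tU ^ (0 : ℤ) * (τ) := by
  apply unit_ext; decide

lemma eq_4_4 : σ₁u * C 4 = C 1 * tU ^ (0 : ℤ) * (τ) := by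
  apply unit_ext; decide

lemma eq_4_5 : σ₁u * C 5 = C 8 * tU ^ (0 : ℤ) * (τ * s₀') := by
  apply unit_ext; decide

lemma eq_4_6 : σ₁u * C 6 = C 9 * tU ^ (1 : ℤ) * (τ) := by
  apply unit_ext; decide

lemma eq_4_7 : σ₁u * C 7 = C 10 * tU ^ (0 : ℤ) * (τ) := by
  apply unit_ext; decide

lemma eq_4_8 : σ₁u * C 8 = C 5 * tU ^ (0 : ℤ) * (τ * s₁') := by
  apply unit_ext; decide

lemma eq_4_9 : σ₁u * C 9 = C 6 * tU ^ (-1 : ℤ) * (τ * s₀' * s₁') := by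
  apply unit_ext; decide

lemma eq_4_10 : σ₁u * C 10 = C 7 * tU ^ (0 : ℤ) * (τ) := by
  apply unit_ext; decide

lemma eq_4_11 : σ₁u * C 11 = C 11 * tU ^ (0 : ℤ) * (τ) := by
  apply unit_ext; decide

lemma eq_5_0 : σ₂u * C 0 = C 5 * tU ^ (0 : ℤ) * (1) := by
  apply unit_ext; decide

lemma eq_5_1 : σ₂u * C 1 = C 1 * tU ^ (0 : ℤ) * (s₀') := by
  apply unit_ext; decide

lemma eq_5_2 : σ₂u * C 2 = C 9 * tU ^ (0 : ℤ) * (1) := by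
  apply unit_ext; decide

lemma eq_5_3 : σ₂u * C 3 = C 3 * tU ^ (0 : ℤ) * (s₀') := by
  apply unit_ext; decide

lemma eq_5_4 : σ₂u * C 4 = C 7 * tU ^ (1 : ℤ) * (1) := by
  apply unit_ext; decide

lemma eq_5_5 : σ₂u * C 5 = C 0 * tU ^ (0 : ℤ) * (1) := by
  apply unit_ext; decide

lemma eq_5_6 : σ₂u * C 6 = C 6 * tU ^ (0 : ℤ) * (s₀') := by
  apply unit_ext; decide

lemma eq_5_7 : σ₂u * C 7 = C 4 * tU ^ (-1 : ℤ) * (1) := by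
  apply unit_ext; decide

lemma eq_5_8 : σ₂u * C 8 = C 11 * tU ^ (-1 : ℤ) * (1) := by
  apply unit_ext; decide

lemma eq_5_9 : σ₂u * C 9 = C 2 * tU ^ (0 : ℤ) * (1) := by
  apply unit_ext; decide

lemma eq_5_10 : σ₂u * C 10 = C 10 * tU ^ (0 : ℤ) * (s₀') := by
  apply unit_ext; decide

lemma eq_5_11 : σ₂u * C 11 = C 8 * tU ^ (1 : ℤ) * (1) := by
  apply unit_ext; decide

lemma step {x : UU} (hx : x ∈ Sset) {g : UU} (hg : Pp g) : Pp (x * g) := by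
  obtain ⟨j, m, h, hh, rfl⟩ := hg
  simp only [Sset, Set.mem_insert_iff, Set.mem_singleton_iff] at hx
  rcases hx with rfl | rfl | rfl | rfl | rfl | rfl <;> fin_cases j
  · exact step_aux (one_mem _) eq_0_0 m hh
  · exact step_aux (one_mem _) eq_0_1 m hh
  · exact step_aux (hgs0) eq_0_2 m hh
  · exact step_aux (hgs0p) eq_0_3 m hh
  · exact step_aux (one_mem _) eq_0_4 m hh
  · exact step_aux (hgs0p) eq_0_5 m hh
  · exact step_aux (one_mem _) eq_0_6 m hh
  · exact step_aux (hgs0) eq_0_7 m hh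
  · exact step_aux (mul_mem (mul_mem (hgs1p) (hgs0p)) (hgs1p)) eq_0_8 m hh
  · exact step_aux (one_mem _) eq_0_9 m hh
  · exact step_aux (hgs0p) eq_0_10 m hh
  · exact step_aux (one_mem _) eq_0_11 m hh
  · exact step_aux (one_mem _) eq_1_0 m hh
  · exact step_aux (hgs0) eq_1_1 m hh
  · exact step_aux (one_mem _) eq_1_2 m hh
  · exact step_aux (one_mem _) eq_1_3 m hh
  · exact step_aux (one_mem _) eq_1_4 m hh
  · exact step_aux (one_mem _) eq_1_5 m hh
  · exact step_aux (hgs0) eq_1_6 m hh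
  · exact step_aux (one_mem _) eq_1_7 m hh
  · exact step_aux (one_mem _) eq_1_8 m hh
  · exact step_aux (one_mem _) eq_1_9 m hh
  · exact step_aux (one_mem _) eq_1_10 m hh
  · exact step_aux (one_mem _) eq_1_11 m hh
  · exact step_aux (one_mem _) eq_2_0 m hh
  · exact step_aux (hgs0p) eq_2_1 m hh
  · exact step_aux (one_mem _) eq_2_2 m hh
  · exact step_aux (one_mem _) eq_2_3 m hh
  · exact step_aux (hgs1) eq_2_4 m hh
  · exact step_aux (hgs0p) eq_2_5 m hh
  · exact step_aux (hgs0p) eq_2_6 m hh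
  · exact step_aux (one_mem _) eq_2_7 m hh
  · exact step_aux (mul_mem (mul_mem (hgs1p) (hgs0p)) (hgs1p)) eq_2_8 m hh
  · exact step_aux (hgs0) eq_2_9 m hh
  · exact step_aux (one_mem _) eq_2_10 m hh
  · exact step_aux (one_mem _) eq_2_11 m hh
  · exact step_aux (one_mem _) eq_3_0 m hh
  · exact step_aux (one_mem _) eq_3_1 m hh
  · exact step_aux (one_mem _) eq_3_2 m hh
  · exact step_aux (hgs1) eq_3_3 m hh
  · exact step_aux (one_mem _) eq_3_4 m hh
  · exact step_aux (one_mem _) eq_3_5 m hh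
  · exact step_aux (one_mem _) eq_3_6 m hh
  · exact step_aux (one_mem _) eq_3_7 m hh
  · exact step_aux (one_mem _) eq_3_8 m hh
  · exact step_aux (one_mem _) eq_3_9 m hh
  · exact step_aux (hgs1) eq_3_10 m hh
  · exact step_aux (one_mem _) eq_3_11 m hh
  · exact step_aux (hgtau) eq_4_0 m hh
  · exact step_aux (hgtau) eq_4_1 m hh
  · exact step_aux (hgtau) eq_4_2 m hh
  · exact step_aux (hgtau) eq_4_3 m hh
  · exact step_aux (hgtau) eq_4_4 m hh
  · exact step_aux (mul_mem (hgtau) (hgs0p)) eq_4_5 m hh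
  · exact step_aux (hgtau) eq_4_6 m hh
  · exact step_aux (hgtau) eq_4_7 m hh
  · exact step_aux (mul_mem (hgtau) (hgs1p)) eq_4_8 m hh
  · exact step_aux (mul_mem (mul_mem (hgtau) (hgs0p)) (hgs1p)) eq_4_9 m hh
  · exact step_aux (hgtau) eq_4_10 m hh
  · exact step_aux (hgtau) eq_4_11 m hh
  · exact step_aux (one_mem _) eq_5_0 m hh
  · exact step_aux (hgs0p) eq_5_1 m hh
  · exact step_aux (one_mem _) eq_5_2 m hh
  · exact step_aux (hgs0p) eq_5_3 m hh
  · exact step_aux (one_mem _) eq_5_4 m hh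
  · exact step_aux (one_mem _) eq_5_5 m hh
  · exact step_aux (hgs0p) eq_5_6 m hh
  · exact step_aux (one_mem _) eq_5_7 m hh
  · exact step_aux (one_mem _) eq_5_8 m hh
  · exact step_aux (one_mem _) eq_5_9 m hh
  · exact step_aux (hgs0p) eq_5_10 m hh
  · exact step_aux (one_mem _) eq_5_11 m hh

lemma Pp_one : Pp 1 := by
  refine ⟨0, 0, 1, one_mem _, ?_⟩
  have hC : C 0 = 1 := rfl
  rw [hC]
  group

lemma Pp_list : ∀ l : List UU, (∀ x ∈ l, x ∈ Sset) → Pp l.prod := by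
  intro l
  induction l with
  | nil => intro _; exact Pp_one
  | cons x t ih =>
      intro hmem
      rw [List.prod_cons]
      exact step (hmem x List.mem_cons_self) (ih fun y hy => hmem y (List.mem_cons_of_mem _ hy))

lemma Sset_inv : ∀ x ∈ Sset, x⁻¹ = x := by
  intro x hx
  simp only [Sset, Set.mem_insert_iff, Set.mem_singleton_iff] at hx
  rcases hx with rfl | rfl | rfl | rfl | rfl | rfl <;> exact Units.ext rfl

lemma htvv : (↑tU : Module.End ℤ Pic) vv = vv + δv := by decide
lemma htvv' : (↑tU⁻¹ : Module.End ℤ Pic) vv = vv - δv := by decide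
lemma htdv : (↑tU : Module.End ℤ Pic) δv = δv := by decide
lemma htdv' : (↑tU⁻¹ : Module.End ℤ Pic) δv = δv := by decide

lemma tpow_dv (m : ℤ) : (↑(tU ^ m) : Module.End ℤ Pic) δv = δv := by
  induction m using Int.induction_on with
  | zero => simp
  | succ n ih =>
      rw [zpow_add_one, Units.val_mul, Module.End.mul_apply, htdv]
      exact ih
  | pred n ih =>
      rw [zpow_sub_one, Units.val_mul, Module.End.mul_apply, htdv']
      exact ih

lemma tpow_vv (m : ℤ) : (↑(tU ^ m) : Module.End ℤ Pic) vv = vv + m • δv := by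
  induction m using Int.induction_on with
  | zero => simp
  | succ n ih =>
      rw [zpow_add_one, Units.val_mul, Module.End.mul_apply, htvv, map_add, ih, tpow_dv]
      rw [add_smul, one_smul]
      abel
  | pred n ih =>
      rw [zpow_sub_one, Units.val_mul, Module.End.mul_apply, htvv', map_sub, ih, tpow_dv]
      rw [sub_smul, one_smul]
      abel

lemma canon_lemma {u : Pic} {m : ℤ} (h : u + m • δv = vv) :
    u + (u 2) • δv = vv + (vv 2) • δv := by
  have hu : u = vv - m • δv := by rw [← h]; abel
  have h2 : u 2 = vv 2 + m := by
    rw [hu]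
    show vv 2 - (m • δv) 2 = vv 2 + m
    have : (m • δv) 2 = m * δv 2 := rfl
    rw [this, show δv 2 = -1 from rfl]
    ring
  rw [h2, hu, add_smul]
  abel

lemma class_unique : ∀ j : Fin 12,
    ((↑(C j) : Module.End ℤ Pic) vv + (((↑(C j) : Module.End ℤ Pic) vv) 2) • δv
      = vv + (vv 2) • δv) → j = 0 := by decide

lemma Cdv : ∀ j : Fin 12, (↑(C j) : Module.End ℤ Pic) δv = δv := by decide

lemma mem_Hsub_of {g : UU} (hg : g ∈ G) (hv : (↑g : Module.End ℤ Pic) vv = vv) :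
    g ∈ Hsub := by
  have hg' : g ∈ Submonoid.closure (Sset ∪ Sset⁻¹) := by
    rw [← Subgroup.closure_toSubmonoid]
    exact hg
  obtain ⟨l, hl, hprod⟩ := Submonoid.exists_list_of_mem_closure hg'
  have hl' : ∀ x ∈ l, x ∈ Sset := by
    intro x hx
    rcases hl x hx with h | h
    · exact h
    · rw [Set.mem_inv] at h
      rw [← inv_inv x, Sset_inv _ h]
      exact h
  have hP : Pp g := by rw [← hprod]; exact Pp_list l hl'
  obtain ⟨j, m, h, hh, rfl⟩ := hP
  have hhv : (↑h : Module.End ℤ Pic) vv = vv := Hsub_le_fix hh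
  have key : (↑(C j) : Module.End ℤ Pic) vv + m • δv = vv := by
    have expand : ((↑(C j * tU ^ m * h) : Module.End ℤ Pic)) vv
        = (↑(C j) : Module.End ℤ Pic) ((↑(tU ^ m) : Module.End ℤ Pic)
            ((↑h : Module.End ℤ Pic) vv)) := by
      rw [Units.val_mul, Units.val_mul, Module.End.mul_apply, Module.End.mul_apply]
    rw [expand, hhv, tpow_vv, map_add, map_smul, Cdv] at hv
    exact hv
  have hj : j = 0 := class_unique j (canon_lemma key)
  subst hj
  have hC0 : C 0 = 1 := rfl
  rw [hC0] at key
  have key' : vv + m • δv = vv := by simpa using key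
  have hm : m = 0 := by
    have := congrFun key' 0
    have h0 : vv 0 + m * δv 0 = vv 0 := this
    rw [show δv 0 = 2 from rfl] at h0
    omega
  subst hm
  have : C 0 * tU ^ (0 : ℤ) * h = h := by rw [hC0]; group
  rwa [this]

end StabiliserProof
/-- The pointwise stabiliser of `α₁ + α₂` in `G = Ŵ(A₃⁽¹⁾)` is the subgroup
generated by `s₀, s₁, s₀', s₁', τ`. -/
theorem stabiliser_eq_closure :
    {g : (Module.End ℤ Pic)ˣ | g ∈ G ∧ (↑g : Module.End ℤ Pic) (α₁ + α₂) = α₁ + α₂}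
      = ↑(Subgroup.closure ({s₀, s₁, s₀', s₁', τ} : Set (Module.End ℤ Pic)ˣ)) := by
  ext g
  simp only [Set.mem_setOf_eq, SetLike.mem_coe]
  constructor
  · rintro ⟨hG, hv⟩
    exact mem_Hsub_of hG hv
  · intro hg
    refine ⟨Hsub_le_G hg, ?_⟩
    exact Hsub_le_fix hg
end
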